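/- Let g = k ⊕ m be the reductive decomposition of a compact Lie algebra associated to a generalised flag manifold, z in the centre of k, and ω_z(A,B) = B(z,[A,B]). If z' is also in the centre z of k and ω_z = ω_{z'} on m × m, then z = z'. -/

import Mathlib

theorem stmt15 {L ι : Type*} [LieRing L] [LieAlgebra ℝ L]
    (B : L →ₗ[ℝ] L →ₗ[ℝ] ℝ)
    (zc m : Submodule ℝ L)
    (Xa Ya : ι → L) (alpha : ι → (L →ₗ[ℝ] ℝ))
    (hXm : ∀ i, Xa i ∈ m) (hYm : ∀ i, Ya i ∈ m)
    (hKKS : ∀ i, ∀ v ∈ zc, B v ⁅Xa i, Ya i⁆ = alpha i v)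
    (hsep : ∀ w ∈ zc, (∀ i, alpha i w = 0) → w = 0)
    (z z' : L) (hz : z ∈ zc) (hz' : z' ∈ zc)
    (heq : ∀ a ∈ m, ∀ b ∈ m, B z ⁅a, b⁆ = B z' ⁅a, b⁆) :
    z = z' := by
  refine sub_eq_zero.mp (hsep (z - z') (zc.sub_mem hz hz') fun i => ?_)
  rw [map_sub, ← hKKS i z hz, ← hKKS i z' hz', heq _ (hXm i) _ (hYm i), sub_self]
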